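/- arXiv:1212.4020 — 4 statements merged into one kernel-verified Lean document; each statement's English description precedes it below -/
import Mathlib

section
/- For all real numbers u₁, u₂ in the open interval (0,1) and all nonnegative reals α, α' with α + α' > 1, one has 1/(1 - u₁u₂) ≤ 1/((1-u₁)^α (1-u₂)^{α'}). -/
open Real Set

theorem stmt_0 (u₁ u₂ α α' : ℝ) (hu₁ : u₁ ∈ Ioo (0:ℝ) 1) (hu₂ : u₂ ∈ Ioo (0:ℝ) 1)
    (hα : 0 ≤ α) (hα' : 0 ≤ α') (hsum : 1 < α + α') :
    1 / (1 - u₁ * u₂) ≤ 1 / ((1 - u₁) ^ α * (1 - u₂) ^ α') := by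
  obtain ⟨h1, h2⟩ := hu₁
  obtain ⟨h3, h4⟩ := hu₂
  have hm : u₁ * u₂ < 1 := by nlinarith
  have ha : 0 < 1 - u₁ * u₂ := by linarith
  have hb1 : 0 < 1 - u₁ := by linarith
  have hb2 : 0 < 1 - u₂ := by linarith
  have hle1 : 1 - u₁ ≤ 1 - u₁ * u₂ := by nlinarith
  have hle2 : 1 - u₂ ≤ 1 - u₁ * u₂ := by nlinarith
  have key : (1 - u₁) ^ α * (1 - u₂) ^ α' ≤ 1 - u₁ * u₂ := by
    calc (1 - u₁) ^ α * (1 - u₂) ^ α'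
        ≤ (1 - u₁ * u₂) ^ α * (1 - u₁ * u₂) ^ α' :=
          mul_le_mul (Real.rpow_le_rpow hb1.le hle1 hα)
            (Real.rpow_le_rpow hb2.le hle2 hα')
            (Real.rpow_nonneg hb2.le _) (Real.rpow_nonneg ha.le _)
      _ = (1 - u₁ * u₂) ^ (α + α') := (Real.rpow_add ha _ _).symm
      _ ≤ (1 - u₁ * u₂) ^ (1:ℝ) := by
          apply Real.rpow_le_rpow_of_exponent_ge ha (by nlinarith) hsum.le
      _ = 1 - u₁ * u₂ := Real.rpow_one _
  have hpos : 0 < (1 - u₁) ^ α * (1 - u₂) ^ α' :=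
    mul_pos (Real.rpow_pos_of_pos hb1 _) (Real.rpow_pos_of_pos hb2 _)
  exact one_div_le_one_div_of_le hpos key
end

section
/- For all real numbers v₁, v₂ in the open interval (0,1) and all nonnegative reals α, α' with α + α' > 1, one has v₁^α · v₂^{α'} ≤ v₁ + v₂ - v₁v₂. -/
open Real Set

theorem stmt_1 (v₁ v₂ α α' : ℝ) (hv₁ : v₁ ∈ Ioo (0:ℝ) 1) (hv₂ : v₂ ∈ Ioo (0:ℝ) 1)
    (hα : 0 ≤ α) (hα' : 0 ≤ α') (hsum : 1 < α + α') :
    v₁ ^ α * v₂ ^ α' ≤ v₁ + v₂ - v₁ * v₂ := by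
  obtain ⟨h10, h11⟩ := hv₁
  obtain ⟨h20, h21⟩ := hv₂
  set s := α + α' with hs
  have hs1 : 1 < s := hsum
  have hs0 : 0 < s := by linarith
  set m := max v₁ v₂ with hm
  have hm0 : 0 < m := lt_max_of_lt_left h10
  have h1 : v₁ ^ α ≤ v₁ ^ (α / s) :=
    rpow_le_rpow_of_exponent_ge h10 h11.le
      (by rw [div_le_iff₀ hs0]; nlinarith)
  have h2 : v₂ ^ α' ≤ v₂ ^ (α' / s) :=
    rpow_le_rpow_of_exponent_ge h20 h21.le
      (by rw [div_le_iff₀ hs0]; nlinarith)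
  have h3 : v₁ ^ (α / s) ≤ m ^ (α / s) :=
    rpow_le_rpow h10.le (le_max_left _ _) (by positivity)
  have h4 : v₂ ^ (α' / s) ≤ m ^ (α' / s) :=
    rpow_le_rpow h20.le (le_max_right _ _) (by positivity)
  have hmm : m ^ (α / s) * m ^ (α' / s) = m := by
    rw [← rpow_add hm0, ← add_div, div_self hs0.ne', rpow_one]
  have key : v₁ ^ α * v₂ ^ α' ≤ m := by
    calc v₁ ^ α * v₂ ^ α' ≤ v₁ ^ (α / s) * v₂ ^ (α' / s) :=
          mul_le_mul h1 h2 (by positivity) (by positivity)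
      _ ≤ m ^ (α / s) * m ^ (α' / s) :=
          mul_le_mul h3 h4 (by positivity) (by positivity)
      _ = m := hmm
  have hmle : m ≤ v₁ + v₂ - v₁ * v₂ := by
    rcases max_cases v₁ v₂ with ⟨h, _⟩ | ⟨h, _⟩ <;> rw [hm, h] <;> nlinarith
  linarith
end

section
/- Let X, Y be independent nonnegative real-valued random variables, and α, α' ≥ 0 with α + α' > 1. If E[(1-X)^{-α}] < ∞ and E[(1-Y)^{-α'}] < ∞, where X, Y take values in (0,1), then E[1/(1 - XY)] < ∞. -/
open Real Set MeasureTheory ProbabilityTheory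

lemma aux_ptwise (u v : ℝ) (hu : u ∈ Ioo (0:ℝ) 1) (hv : v ∈ Ioo (0:ℝ) 1)
    (α α' : ℝ) (hα : 0 ≤ α) (hα' : 0 ≤ α') (hsum : 1 < α + α') :
    1 / (1 - u * v) ≤ (1 - u) ^ (-α) * (1 - v) ^ (-α') := by
  obtain ⟨hu0, hu1⟩ := hu
  obtain ⟨hv0, hv1⟩ := hv
  have h1 : (0:ℝ) < 1 - u := by linarith
  have h2 : (0:ℝ) < 1 - v := by linarith
  have h3 : (0:ℝ) < 1 - u * v := by nlinarith
  have key : (1 - u) ^ α * (1 - v) ^ α' ≤ 1 - u * v := by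
    calc (1 - u) ^ α * (1 - v) ^ α'
        ≤ (1 - u * v) ^ α * (1 - u * v) ^ α' := by
          apply mul_le_mul
          · exact Real.rpow_le_rpow h1.le (by nlinarith) hα
          · exact Real.rpow_le_rpow h2.le (by nlinarith) hα'
          · positivity
          · positivity
      _ = (1 - u * v) ^ (α + α') := (Real.rpow_add h3 _ _).symm
      _ ≤ (1 - u * v) ^ (1:ℝ) :=
          Real.rpow_le_rpow_of_exponent_ge h3 (by nlinarith) hsum.le
      _ = 1 - u * v := Real.rpow_one _
  have hpos : (0:ℝ) < (1 - u) ^ α * (1 - v) ^ α' := by positivity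
  have := one_div_le_one_div_of_le hpos key
  calc 1 / (1 - u * v) ≤ 1 / ((1 - u) ^ α * (1 - v) ^ α') := this
    _ = (1 - u) ^ (-α) * (1 - v) ^ (-α') := by
        rw [Real.rpow_neg h1.le, Real.rpow_neg h2.le, one_div, mul_inv]

theorem stmt_2 {Ω : Type*} [MeasurableSpace Ω] (P : Measure Ω) [IsProbabilityMeasure P]
    (X Y : Ω → ℝ) (hX : Measurable X) (hY : Measurable Y)
    (hXY : IndepFun X Y P)
    (hX01 : ∀ ω, X ω ∈ Ioo (0:ℝ) 1) (hY01 : ∀ ω, Y ω ∈ Ioo (0:ℝ) 1)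
    (α α' : ℝ) (hα : 0 ≤ α) (hα' : 0 ≤ α') (hsum : 1 < α + α')
    (hXint : Integrable (fun ω => (1 - X ω) ^ (-α)) P)
    (hYint : Integrable (fun ω => (1 - Y ω) ^ (-α')) P) :
    Integrable (fun ω => 1 / (1 - X ω * Y ω)) P := by
  have hfm : Measurable fun x : ℝ => (1 - x) ^ (-α) :=
    by fun_prop
  have hgm : Measurable fun x : ℝ => (1 - x) ^ (-α') :=
    by fun_prop
  have hindep : IndepFun (fun ω => (1 - X ω) ^ (-α)) (fun ω => (1 - Y ω) ^ (-α')) P :=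
    hXY.comp hfm hgm
  have hprod : Integrable (fun ω => (1 - X ω) ^ (-α) * (1 - Y ω) ^ (-α')) P :=
    hindep.integrable_mul hXint hYint
  have hmeas : AEStronglyMeasurable (fun ω => 1 / (1 - X ω * Y ω)) P := by
    apply Measurable.aestronglyMeasurable
    exact (measurable_const.div (measurable_const.sub (hX.mul hY)))
  refine hprod.mono hmeas ?_
  filter_upwards with ω
  obtain ⟨hu0, hu1⟩ := hX01 ω
  obtain ⟨hv0, hv1⟩ := hY01 ω
  have h1 : (0:ℝ) < 1 - X ω := by linarith
  have h2 : (0:ℝ) < 1 - Y ω := by linarith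
  have h3 : (0:ℝ) < 1 - X ω * Y ω := by nlinarith
  rw [Real.norm_eq_abs, Real.norm_eq_abs, abs_of_nonneg (by positivity),
    abs_of_nonneg (by positivity)]
  exact aux_ptwise _ _ ⟨hu0, hu1⟩ ⟨hv0, hv1⟩ α α' hα hα' hsum
end

section
/- Let (Y_j)_{j=1}^{n} be nonnegative random variables such that {Y_j : j even} and {Y_j : j odd} are each families of independent random variables, and suppose E[Y_j^α]^{1/2} ≤ C for some α > 0 and C > 0 and all j. Then for every t > 0: P(Σ_{k=1}^{n} ∏_{j=k+1}^{n} Y_j^{-1} > t) ≤ t^{-α/2} n^{α/2} Σ_{k=1}^{n} ∏_{j=k+1}^{n} E[Y_j^{-α}]^{1/2}, provided also E[Y_j^{-α}]^{1/2} ≤ C for all j. -/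
open MeasureTheory ENNReal


/-- Factorization of the lintegral of a nonnegative product whose Bochner integral factorizes. -/
lemma factorA {Ω : Type*} [MeasurableSpace Ω] (P : Measure Ω)
    (S : Finset ℕ) (g : ℕ → Ω → ℝ) (hmeas : ∀ j, Measurable (g j)) (hnn : ∀ j ω, 0 ≤ g j ω)
    (hint : ∀ j, Integrable (g j) P)
    (hfac : ∫ ω, ∏ j ∈ S, g j ω ∂P = ∏ j ∈ S, ∫ ω, g j ω ∂P) :
    ∫⁻ ω, ENNReal.ofReal (∏ j ∈ S, g j ω) ∂P
      = ∏ j ∈ S, ENNReal.ofReal (∫ ω, g j ω ∂P) := by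
  have hmS : Measurable fun ω => ∏ j ∈ S, g j ω :=
    Finset.measurable_prod _ fun j _ => hmeas j
  have hnnS : 0 ≤ᵐ[P] fun ω => ∏ j ∈ S, g j ω :=
    Filter.Eventually.of_forall fun ω => Finset.prod_nonneg fun j _ => hnn j ω
  by_cases hfin : ∫⁻ ω, ENNReal.ofReal (∏ j ∈ S, g j ω) ∂P = ∞
  · exfalso
    have hnotint : ¬ Integrable (fun ω => ∏ j ∈ S, g j ω) P := by
      intro h
      have := (hasFiniteIntegral_iff_ofReal hnnS).mp h.2
      exact (ne_of_lt this) hfin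
    have h0 : ∫ ω, ∏ j ∈ S, g j ω ∂P = 0 := integral_undef hnotint
    rw [h0] at hfac
    obtain ⟨j, hjS, hj0⟩ := Finset.prod_eq_zero_iff.mp hfac.symm
    have hjz : g j =ᵐ[P] 0 :=
      (integral_eq_zero_iff_of_nonneg (fun ω => hnn j ω) (hint j)).mp hj0
    have hz : (fun ω => ENNReal.ofReal (∏ j ∈ S, g j ω)) =ᵐ[P] 0 :=
      hjz.mono fun ω hω => by
        have hω' : g j ω = 0 := hω
        simp [Finset.prod_eq_zero (f := fun i => g i ω) hjS hω']
    have h00 : ∫⁻ ω, ENNReal.ofReal (∏ j ∈ S, g j ω) ∂P = 0 := by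
      rw [lintegral_congr_ae hz]; simp
    rw [h00] at hfin; simp at hfin
  · have hintS : Integrable (fun ω => ∏ j ∈ S, g j ω) P :=
      ⟨hmS.aestronglyMeasurable,
        (hasFiniteIntegral_iff_ofReal hnnS).mpr (lt_top_iff_ne_top.mpr hfin)⟩
    rw [← ofReal_integral_eq_lintegral_ofReal hintS hnnS, hfac,
      ENNReal.ofReal_prod_of_nonneg fun j _ => integral_nonneg fun ω => hnn j ω]

lemma factorB {Ω : Type*} [MeasurableSpace Ω] (P : Measure Ω)
    (S : Finset ℕ) (g : ℕ → Ω → ℝ) (hmeas : ∀ j, Measurable (g j)) (hnn : ∀ j ω, 0 ≤ g j ω)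
    (hint : ∀ j, Integrable (g j) P)
    (hfacE : ∫ ω, ∏ j ∈ S.filter (fun j => Even j), g j ω ∂P
        = ∏ j ∈ S.filter (fun j => Even j), ∫ ω, g j ω ∂P)
    (hfacO : ∫ ω, ∏ j ∈ S.filter (fun j => ¬ Even j), g j ω ∂P
        = ∏ j ∈ S.filter (fun j => ¬ Even j), ∫ ω, g j ω ∂P) :
    ∫⁻ ω, ∏ j ∈ S, (ENNReal.ofReal (g j ω)) ^ ((1:ℝ)/2) ∂P
      ≤ ∏ j ∈ S, ENNReal.ofReal (Real.sqrt (∫ ω, g j ω ∂P)) := by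
  classical
  set Se := S.filter (fun j => Even j) with hSe
  set So := S.filter (fun j => ¬ Even j) with hSo
  set f1 : Ω → ℝ≥0∞ := fun ω => ∏ j ∈ Se, (ENNReal.ofReal (g j ω)) ^ ((1:ℝ)/2) with hf1
  set f2 : Ω → ℝ≥0∞ := fun ω => ∏ j ∈ So, (ENNReal.ofReal (g j ω)) ^ ((1:ℝ)/2) with hf2
  have hm : ∀ (T : Finset ℕ), Measurable fun ω => ∏ j ∈ T, (ENNReal.ofReal (g j ω)) ^ ((1:ℝ)/2) :=
    fun T => Finset.measurable_prod _ fun j _ => ((hmeas j).ennreal_ofReal).pow_const _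
  have hpq : Real.HolderConjugate 2 2 := Real.holderConjugate_iff.mpr ⟨one_lt_two, by norm_num⟩
  have hsq : ∀ (T : Finset ℕ) (ω : Ω),
      (∏ j ∈ T, (ENNReal.ofReal (g j ω)) ^ ((1:ℝ)/2)) ^ (2:ℝ)
        = ENNReal.ofReal (∏ j ∈ T, g j ω) := by
    intro T ω
    rw [← ENNReal.prod_rpow_of_nonneg (by norm_num : (0:ℝ) ≤ 2),
      ENNReal.ofReal_prod_of_nonneg fun j _ => hnn j ω]
    refine Finset.prod_congr rfl fun j _ => ?_
    rw [← ENNReal.rpow_mul]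
    norm_num
  have key : ∀ (T : Finset ℕ),
      (∫ ω, ∏ j ∈ T, g j ω ∂P = ∏ j ∈ T, ∫ ω, g j ω ∂P) →
      (∫⁻ ω, (∏ j ∈ T, (ENNReal.ofReal (g j ω)) ^ ((1:ℝ)/2)) ^ (2:ℝ) ∂P) ^ ((1:ℝ)/2)
        = ∏ j ∈ T, ENNReal.ofReal (Real.sqrt (∫ ω, g j ω ∂P)) := by
    intro T hfac
    have : ∫⁻ ω, (∏ j ∈ T, (ENNReal.ofReal (g j ω)) ^ ((1:ℝ)/2)) ^ (2:ℝ) ∂P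
        = ∏ j ∈ T, ENNReal.ofReal (∫ ω, g j ω ∂P) := by
      rw [lintegral_congr fun ω => hsq T ω]
      exact factorA P T g hmeas hnn hint hfac
    rw [this, ← ENNReal.prod_rpow_of_nonneg (by norm_num : (0:ℝ) ≤ 1/2)]
    refine Finset.prod_congr rfl fun j _ => ?_
    rw [Real.sqrt_eq_rpow, ENNReal.ofReal_rpow_of_nonneg (integral_nonneg fun ω => hnn j ω)
      (by norm_num : (0:ℝ) ≤ 1/2)]
  have hsplit : ∀ ω, ∏ j ∈ S, (ENNReal.ofReal (g j ω)) ^ ((1:ℝ)/2) = f1 ω * f2 ω := by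
    intro ω
    rw [hf1, hf2, hSe, hSo, Finset.prod_filter_mul_prod_filter_not]
  calc ∫⁻ ω, ∏ j ∈ S, (ENNReal.ofReal (g j ω)) ^ ((1:ℝ)/2) ∂P
      = ∫⁻ ω, f1 ω * f2 ω ∂P := lintegral_congr hsplit
    _ ≤ (∫⁻ ω, f1 ω ^ (2:ℝ) ∂P) ^ ((1:ℝ)/2) * (∫⁻ ω, f2 ω ^ (2:ℝ) ∂P) ^ ((1:ℝ)/2) := by
        exact ENNReal.lintegral_mul_le_Lp_mul_Lq P hpq (hm Se).aemeasurable (hm So).aemeasurable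
    _ = (∏ j ∈ Se, ENNReal.ofReal (Real.sqrt (∫ ω, g j ω ∂P)))
        * ∏ j ∈ So, ENNReal.ofReal (Real.sqrt (∫ ω, g j ω ∂P)) := by
        rw [key Se hfacE, key So hfacO]
    _ = ∏ j ∈ S, ENNReal.ofReal (Real.sqrt (∫ ω, g j ω ∂P)) := by
        rw [hSe, hSo, Finset.prod_filter_mul_prod_filter_not]
open MeasureTheory ENNReal

theorem stmt_16 {Ω : Type*} [MeasurableSpace Ω] (P : Measure Ω) [IsProbabilityMeasure P]
    (n : ℕ) (Y : ℕ → Ω → ℝ) (hmeas : ∀ j, Measurable (Y j))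
    (hnonneg : ∀ j ω, 0 ≤ Y j ω)
    (α C : ℝ) (hα : 0 < α) (hC : 0 < C)
    (hint : ∀ j, Integrable (fun ω => (Y j ω) ^ (-α)) P)
    (heven : ∀ S : Finset ℕ, (∀ j ∈ S, Even j) →
      ∫ ω, ∏ j ∈ S, (Y j ω) ^ (-α) ∂P = ∏ j ∈ S, ∫ ω, (Y j ω) ^ (-α) ∂P)
    (hodd : ∀ S : Finset ℕ, (∀ j ∈ S, Odd j) →
      ∫ ω, ∏ j ∈ S, (Y j ω) ^ (-α) ∂P = ∏ j ∈ S, ∫ ω, (Y j ω) ^ (-α) ∂P)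
    (hmom : ∀ j, Real.sqrt (∫ ω, (Y j ω) ^ α ∂P) ≤ C)
    (hmom' : ∀ j, Real.sqrt (∫ ω, (Y j ω) ^ (-α) ∂P) ≤ C)
    (t : ℝ) (ht : 0 < t) :
    P {ω | t < ∑ k ∈ Finset.Icc 1 n, ∏ j ∈ Finset.Icc (k + 1) n, (Y j ω)⁻¹}
      ≤ ENNReal.ofReal (t ^ (-(α / 2)) * (n : ℝ) ^ (α / 2) *
        ∑ k ∈ Finset.Icc 1 n, ∏ j ∈ Finset.Icc (k + 1) n,
          Real.sqrt (∫ ω, (Y j ω) ^ (-α) ∂P)) := by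
  classical
  set g : ℕ → Ω → ℝ := fun j ω => (Y j ω) ^ (-α) with hg
  have hgm : ∀ j, Measurable (g j) := fun j => (hmeas j).pow_const _
  have hgnn : ∀ j ω, 0 ≤ g j ω := fun j ω => Real.rpow_nonneg (hnonneg j ω) _
  rcases Nat.eq_zero_or_pos n with hn0 | hn
  · subst hn0
    have hempty : {ω : Ω | t < ∑ k ∈ Finset.Icc 1 0,
        ∏ j ∈ Finset.Icc (k + 1) 0, (Y j ω)⁻¹} = ∅ := by
      ext ω; simp [ht.not_gt, (by norm_num : Finset.Icc 1 0 = (∅ : Finset ℕ))]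
    rw [hempty]
    simp
  have hnR : (0:ℝ) < n := by exact_mod_cast hn
  set s : ℝ := t / n with hs
  have hspos : 0 < s := div_pos ht hnR
  set X : ℕ → Ω → ℝ := fun k ω => ∏ j ∈ Finset.Icc (k+1) n, (Y j ω)⁻¹ with hX
  set c : ℝ := t ^ (-(α / 2)) * (n : ℝ) ^ (α / 2) with hc
  have hcnn : 0 ≤ c := by positivity
  have hsub : {ω | t < ∑ k ∈ Finset.Icc 1 n, X k ω}
      ⊆ ⋃ k ∈ Finset.Icc 1 n, {ω | s < X k ω} := by
    intro ω hω
    by_contra hcon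
    simp only [Set.mem_iUnion, Set.mem_setOf_eq, not_exists, not_lt] at hcon
    have hsum : ∑ k ∈ Finset.Icc 1 n, X k ω ≤ (Finset.Icc 1 n).card • s :=
      Finset.sum_le_card_nsmul _ _ s fun k hk => hcon k hk
    have hcard : (Finset.Icc 1 n).card = n := by rw [Nat.card_Icc]; omega
    rw [hcard, nsmul_eq_mul] at hsum
    have hns : (n:ℝ) * s = t := by rw [hs]; field_simp
    rw [hns] at hsum
    exact absurd hω (by simp only [Set.mem_setOf_eq]; exact not_lt.2 hsum)
  refine le_trans (measure_mono hsub) (le_trans (measure_biUnion_finset_le _ _) ?_)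
  have hkey : ∀ k, P {ω | s < X k ω} ≤ ENNReal.ofReal c *
      ∏ j ∈ Finset.Icc (k+1) n, ENNReal.ofReal (Real.sqrt (∫ ω, g j ω ∂P)) := by
    intro k
    set S : Finset ℕ := Finset.Icc (k+1) n with hS
    have hF : ∀ ω, ENNReal.ofReal (X k ω ^ (α/2))
        = ∏ j ∈ S, (ENNReal.ofReal (g j ω)) ^ ((1:ℝ)/2) := by
      intro ω
      have h1 : X k ω ^ (α/2) = ∏ j ∈ S, (g j ω) ^ ((1:ℝ)/2) := by
        rw [hX, ← Real.finset_prod_rpow S _ (fun j _ => inv_nonneg.2 (hnonneg j ω)) (α/2)]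
        refine Finset.prod_congr rfl fun j _ => ?_
        have hy := hnonneg j ω
        rw [hg, Real.inv_rpow hy, ← Real.rpow_neg hy, ← Real.rpow_mul hy]
        congr 1
        ring
      have h2 : ENNReal.ofReal (∏ j ∈ S, g j ω ^ ((1:ℝ)/2))
          = ∏ j ∈ S, ENNReal.ofReal (g j ω ^ ((1:ℝ)/2)) :=
        ENNReal.ofReal_prod_of_nonneg fun j _ => Real.rpow_nonneg (hgnn j ω) ((1:ℝ)/2)
      rw [h1, h2]
      exact Finset.prod_congr rfl fun j _ =>
        (ENNReal.ofReal_rpow_of_nonneg (hgnn j ω) (by norm_num : (0:ℝ) ≤ 1/2)).symm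
    set ε : ℝ≥0∞ := ENNReal.ofReal (s ^ (α/2)) with hε
    have hε0 : ε ≠ 0 := by
      rw [hε]
      simp only [ne_eq, ENNReal.ofReal_eq_zero, not_le]
      positivity
    have hεt : ε ≠ ⊤ := ENNReal.ofReal_ne_top
    have hXm : Measurable (X k) := Finset.measurable_prod _ fun j _ => (hmeas j).inv
    have hmeasF : Measurable fun ω => ENNReal.ofReal (X k ω ^ (α/2)) :=
      (hXm.pow_const _).ennreal_ofReal
    have hsubk : {ω | s < X k ω} ⊆ {ω | ε ≤ ENNReal.ofReal (X k ω ^ (α/2))} := by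
      intro ω hω
      exact ENNReal.ofReal_le_ofReal
        (Real.rpow_le_rpow hspos.le (le_of_lt hω) (by positivity))
    have hmark := meas_ge_le_lintegral_div (μ := P) hmeasF.aemeasurable hε0 hεt
    have hE : ∫ ω, ∏ j ∈ S.filter (fun j => Even j), g j ω ∂P
        = ∏ j ∈ S.filter (fun j => Even j), ∫ ω, g j ω ∂P :=
      heven _ fun j hj => (Finset.mem_filter.1 hj).2
    have hO : ∫ ω, ∏ j ∈ S.filter (fun j => ¬ Even j), g j ω ∂P
        = ∏ j ∈ S.filter (fun j => ¬ Even j), ∫ ω, g j ω ∂P :=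
      hodd _ fun j hj => Nat.not_even_iff_odd.1 (Finset.mem_filter.1 hj).2
    have hCS := factorB P S g hgm hgnn hint hE hO
    have hεinv : ε⁻¹ = ENNReal.ofReal c := by
      rw [hε, ← ENNReal.ofReal_inv_of_pos (by positivity)]
      congr 1
      rw [← Real.rpow_neg hspos.le, hs, Real.div_rpow ht.le hnR.le, hc,
        div_eq_mul_inv, ← Real.rpow_neg hnR.le]
      congr 1
      ring
    calc P {ω | s < X k ω}
        ≤ P {ω | ε ≤ ENNReal.ofReal (X k ω ^ (α/2))} := measure_mono hsubk
      _ ≤ (∫⁻ ω, ENNReal.ofReal (X k ω ^ (α/2)) ∂P) / ε := hmark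
      _ ≤ (∏ j ∈ S, ENNReal.ofReal (Real.sqrt (∫ ω, g j ω ∂P))) / ε := by
          refine ENNReal.div_le_div_right ?_ ε
          rw [lintegral_congr hF]
          exact hCS
      _ = ENNReal.ofReal c * ∏ j ∈ S, ENNReal.ofReal (Real.sqrt (∫ ω, g j ω ∂P)) := by
          rw [div_eq_mul_inv, hεinv, mul_comm]
  calc ∑ k ∈ Finset.Icc 1 n, P {ω | s < X k ω}
      ≤ ∑ k ∈ Finset.Icc 1 n, ENNReal.ofReal c *
          ∏ j ∈ Finset.Icc (k+1) n, ENNReal.ofReal (Real.sqrt (∫ ω, g j ω ∂P)) :=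
        Finset.sum_le_sum fun k _ => hkey k
    _ = ENNReal.ofReal c * ∑ k ∈ Finset.Icc 1 n,
          ∏ j ∈ Finset.Icc (k+1) n, ENNReal.ofReal (Real.sqrt (∫ ω, g j ω ∂P)) :=
        (Finset.mul_sum _ _ _).symm
    _ = ENNReal.ofReal (c * ∑ k ∈ Finset.Icc 1 n,
          ∏ j ∈ Finset.Icc (k+1) n, Real.sqrt (∫ ω, g j ω ∂P)) := by
        rw [ENNReal.ofReal_mul hcnn]
        congr 1
        rw [ENNReal.ofReal_sum_of_nonneg fun k _ =>
          Finset.prod_nonneg fun j _ => Real.sqrt_nonneg _]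
        exact Finset.sum_congr rfl fun k _ =>
          (ENNReal.ofReal_prod_of_nonneg fun j _ => Real.sqrt_nonneg _).symm
    _ = ENNReal.ofReal (t ^ (-(α / 2)) * (n : ℝ) ^ (α / 2) *
          ∑ k ∈ Finset.Icc 1 n, ∏ j ∈ Finset.Icc (k + 1) n,
            Real.sqrt (∫ ω, g j ω ∂P)) := by rw [hc]
end
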